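/- arXiv:2502.16559 — 4 statements merged into one kernel-verified Lean document; each statement's English description precedes it below -/
import Mathlib

section
/- Let n ≥ 1, let W : ℝⁿ → ℝⁿ be a vector field and η a 1-form on ℝⁿ, and let N = W⊗η be the (1,1) tensor field N(p)(v) = η(p)(v)·W(p). Then the Haantjes torsion of N is H_N(X,Y) = −⟨η,W⟩²·(η∧dη)(W,X,Y)·W for all vector fields X, Y. -/
noncomputable section

variable {n : ℕ}

/-- Points of ℝⁿ. -/
abbrev Vn (n : ℕ) : Type := Fin n → ℝ

/-- Lie bracket of vector fields on ℝⁿ. -/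
def lieB (X Y : Vn n → Vn n) : Vn n → Vn n :=
  fun p => fderiv ℝ Y p (X p) - fderiv ℝ X p (Y p)

/-- Nijenhuis torsion of a (1,1) tensor field, given by its pointwise action. -/
def nijT (N : Vn n → Vn n → Vn n) (X Y : Vn n → Vn n) : Vn n → Vn n :=
  fun p =>
    lieB (fun q => N q (X q)) (fun q => N q (Y q)) p
      - N p (lieB (fun q => N q (X q)) Y p + lieB X (fun q => N q (Y q)) p
              - N p (lieB X Y p))

/-- Haantjes torsion of a (1,1) tensor field. -/
def haanT (N : Vn n → Vn n → Vn n) (X Y : Vn n → Vn n) : Vn n → Vn n :=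
  fun p =>
    nijT N (fun q => N q (X q)) (fun q => N q (Y q)) p
      - N p (nijT N (fun q => N q (X q)) Y p + nijT N X (fun q => N q (Y q)) p
              - N p (nijT N X Y p))

/-- Exterior derivative of a 1-form, evaluated on vector fields. -/
def dOneL (η : Vn n → Vn n →L[ℝ] ℝ) (X Y : Vn n → Vn n) : Vn n → ℝ :=
  fun p => fderiv ℝ (fun q => η q (Y q)) p (X p) - fderiv ℝ (fun q => η q (X q)) p (Y p)
    - η p (lieB X Y p)

/-- `(η∧dη)(W,X,Y) = ⟨η,W⟩dη(X,Y) − ⟨η,X⟩dη(W,Y) + ⟨η,Y⟩dη(W,X)`. -/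
def etaWedgeDeta (η : Vn n → Vn n →L[ℝ] ℝ) (W X Y : Vn n → Vn n) : Vn n → ℝ :=
  fun p => η p (W p) * dOneL η X Y p - η p (X p) * dOneL η W Y p
    + η p (Y p) * dOneL η W X p

/-- Derivative of the scalar function `q ↦ η q (X q)`. -/
lemma fderiv_eta_apply (η : Vn n → Vn n →L[ℝ] ℝ) (X : Vn n → Vn n) {p : Vn n}
    (hη : DifferentiableAt ℝ η p) (hX : DifferentiableAt ℝ X p) (v : Vn n) :
    fderiv ℝ (fun q => η q (X q)) p v
      = fderiv ℝ η p v (X p) + η p (fderiv ℝ X p v) := by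
  rw [fderiv_clm_apply hη hX]
  simp [ContinuousLinearMap.add_apply]
  ring

/-- Derivative of a scalar multiple of a vector field. -/
lemma fderiv_smul_vf (f : Vn n → ℝ) (Z : Vn n → Vn n) {p : Vn n}
    (hf : DifferentiableAt ℝ f p) (hZ : DifferentiableAt ℝ Z p) (v : Vn n) :
    fderiv ℝ (fun q => f q • Z q) p v
      = fderiv ℝ f p v • Z p + f p • fderiv ℝ Z p v := by
  rw [fderiv_fun_smul hf hZ]
  simp [ContinuousLinearMap.add_apply]
  module

/-- Pointwise formula for the Nijenhuis torsion of `N = W⊗η`. -/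
lemma nij_formula (W : Vn n → Vn n) (hW : ContDiff ℝ (⊤ : ℕ∞) W)
    (η : Vn n → Vn n →L[ℝ] ℝ) (hη : ContDiff ℝ (⊤ : ℕ∞) η)
    (X Y : Vn n → Vn n) {p : Vn n}
    (hX : DifferentiableAt ℝ X p) (hY : DifferentiableAt ℝ Y p) :
    nijT (fun q v => η q v • W q) X Y p =
      (η p (X p) * (fderiv ℝ η p (W p) (Y p) + η p (fderiv ℝ W p (Y p)))
        - η p (Y p) * (fderiv ℝ η p (W p) (X p) + η p (fderiv ℝ W p (X p)))
        - η p (W p) * (fderiv ℝ η p (X p) (Y p) - fderiv ℝ η p (Y p) (X p))) • W p := by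
  have hηp : DifferentiableAt ℝ η p := (hη.differentiable (by simp)) p
  have hWp : DifferentiableAt ℝ W p := (hW.differentiable (by simp)) p
  have haX : DifferentiableAt ℝ (fun q => η q (X q)) p := hηp.clm_apply hX
  have haY : DifferentiableAt ℝ (fun q => η q (Y q)) p := hηp.clm_apply hY
  have hNX : DifferentiableAt ℝ (fun q => η q (X q) • W q) p := haX.smul hWp
  have hNY : DifferentiableAt ℝ (fun q => η q (Y q) • W q) p := haY.smul hWp
  simp only [nijT, lieB]
  rw [fderiv_smul_vf _ _ haY hWp, fderiv_smul_vf _ _ haX hWp,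
      fderiv_smul_vf _ _ haY hWp, fderiv_smul_vf _ _ haX hWp,
      fderiv_eta_apply _ _ hηp hY, fderiv_eta_apply _ _ hηp hX,
      fderiv_eta_apply _ _ hηp hY, fderiv_eta_apply _ _ hηp hX]
  simp only [map_add, map_sub, map_smul, smul_eq_mul, ContinuousLinearMap.smul_apply]
  module

/-- The Haantjes torsion of the rank-one tensor field `N = W⊗η` on ℝⁿ
is `H_N(X,Y) = −⟨η,W⟩²·(η∧dη)(W,X,Y)·W`. -/
theorem stmt13 (n : ℕ) (hn : 1 ≤ n)
    (W : Vn n → Vn n) (hW : ContDiff ℝ (⊤ : ℕ∞) W)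
    (η : Vn n → Vn n →L[ℝ] ℝ) (hη : ContDiff ℝ (⊤ : ℕ∞) η)
    (N : Vn n → Vn n → Vn n) (hN : ∀ p v, N p v = η p v • W p) :
    ∀ X Y : Vn n → Vn n, ContDiff ℝ (⊤ : ℕ∞) X → ContDiff ℝ (⊤ : ℕ∞) Y → ∀ p,
      haanT N X Y p = -((η p (W p)) ^ 2 * etaWedgeDeta η W X Y p) • W p := by
  obtain rfl : N = fun q v => η q v • W q := funext fun q => funext fun v => hN q v
  intro X Y hX hY p
  have hηp : DifferentiableAt ℝ η p := (hη.differentiable (by simp)) p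
  have hWp : DifferentiableAt ℝ W p := (hW.differentiable (by simp)) p
  have hXp : DifferentiableAt ℝ X p := (hX.differentiable (by simp)) p
  have hYp : DifferentiableAt ℝ Y p := (hY.differentiable (by simp)) p
  have hNX : ∀ q, DifferentiableAt ℝ (fun r => η r (X r) • W r) q := fun q =>
    (((hη.differentiable (by simp)) q).clm_apply ((hX.differentiable (by simp)) q)).smul
      ((hW.differentiable (by simp)) q)
  have hNY : ∀ q, DifferentiableAt ℝ (fun r => η r (Y r) • W r) q := fun q =>
    (((hη.differentiable (by simp)) q).clm_apply ((hY.differentiable (by simp)) q)).smul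
      ((hW.differentiable (by simp)) q)
  -- rewrite dOneL in etaWedgeDeta pointwise
  have dOne : ∀ (A B : Vn n → Vn n), DifferentiableAt ℝ A p → DifferentiableAt ℝ B p →
      dOneL η A B p = fderiv ℝ η p (A p) (B p) - fderiv ℝ η p (B p) (A p) := by
    intro A B hA hB
    simp only [dOneL, lieB]
    rw [fderiv_eta_apply _ _ hηp hB, fderiv_eta_apply _ _ hηp hA]
    simp only [map_sub]
    ring
  simp only [haanT]
  rw [nij_formula W hW η hη _ _ (hNX p) (hNY p),
      nij_formula W hW η hη _ _ (hNX p) hYp,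
      nij_formula W hW η hη _ _ hXp (hNY p),
      nij_formula W hW η hη _ _ hXp hYp]
  simp only [etaWedgeDeta, dOne X Y hXp hYp, dOne W Y hWp hYp, dOne W X hWp hXp,
    map_add, map_sub, map_smul, smul_eq_mul, ContinuousLinearMap.smul_apply]
  module
end
end

section
/- Let n ≥ 1, let W : ℝⁿ → ℝⁿ be a vector field and η a 1-form on ℝⁿ, and let N = W⊗η be the (1,1) tensor field N(p)(v) = η(p)(v)·W(p). Then the Nijenhuis torsion of N is T_N(X,Y) = (⟨η,X⟩·Y(⟨η,W⟩) − ⟨η,Y⟩·X(⟨η,W⟩) − (η∧dη)(W,X,Y))·W for all vector fields X, Y. -/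
noncomputable section

variable {n : ℕ}

lemma hd1 (η : Vn n → Vn n →L[ℝ] ℝ) (X : Vn n → Vn n)
    (hη : ContDiff ℝ (⊤ : ℕ∞) η) (hX : ContDiff ℝ (⊤ : ℕ∞) X) (p v : Vn n) :
    fderiv ℝ (fun q => η q (X q)) p v
      = fderiv ℝ η p v (X p) + η p (fderiv ℝ X p v) := by
  rw [fderiv_clm_apply (hη.differentiable (by simp) p) (hX.differentiable (by simp) p)]
  simp [add_comm]

lemma hd2 (η : Vn n → Vn n →L[ℝ] ℝ) (X W : Vn n → Vn n)
    (hη : ContDiff ℝ (⊤ : ℕ∞) η) (hX : ContDiff ℝ (⊤ : ℕ∞) X) (hW : ContDiff ℝ (⊤ : ℕ∞) W) (p v : Vn n) :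
    fderiv ℝ (fun q => η q (X q) • W q) p v
      = (fderiv ℝ η p v (X p) + η p (fderiv ℝ X p v)) • W p
        + η p (X p) • fderiv ℝ W p v := by
  rw [fderiv_fun_smul ((hη.clm_apply hX).differentiable (by simp) p) (hW.differentiable (by simp) p)]
  simp [hd1 η X hη hX p v, add_comm]

/-- The Nijenhuis torsion of the rank-one tensor field `N = W⊗η` on ℝⁿ
is `T_N(X,Y) = (⟨η,X⟩·Y(⟨η,W⟩) − ⟨η,Y⟩·X(⟨η,W⟩) − (η∧dη)(W,X,Y))·W`. -/
theorem stmt14 (n : ℕ) (hn : 1 ≤ n)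
    (W : Vn n → Vn n) (hW : ContDiff ℝ (⊤ : ℕ∞) W)
    (η : Vn n → Vn n →L[ℝ] ℝ) (hη : ContDiff ℝ (⊤ : ℕ∞) η)
    (N : Vn n → Vn n → Vn n) (hN : ∀ p v, N p v = η p v • W p) :
    ∀ X Y : Vn n → Vn n, ContDiff ℝ (⊤ : ℕ∞) X → ContDiff ℝ (⊤ : ℕ∞) Y → ∀ p,
      nijT N X Y p
        = (η p (X p) * fderiv ℝ (fun q => η q (W q)) p (Y p)
            - η p (Y p) * fderiv ℝ (fun q => η q (W q)) p (X p)
            - etaWedgeDeta η W X Y p) • W p := by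
  intro X Y hX hY p
  simp only [nijT, lieB, etaWedgeDeta, dOneL, hN,
    hd2 η X W hη hX hW, hd2 η Y W hη hY hW,
    hd1 η X hη hX, hd1 η Y hη hY, hd1 η W hη hW]
  simp only [map_add, map_sub, map_smul, ContinuousLinearMap.map_smul_of_tower,
    ContinuousLinearMap.add_apply, ContinuousLinearMap.smul_apply, smul_eq_mul]
  module
end
end

section
/- Let n ≥ 1, let N be a (1,1) tensor field on ℝⁿ and let f, g : ℝⁿ → ℝ be smooth functions. Then the Haantjes torsion of the (1,1) tensor field f·I + g·N satisfies H_{fI+gN}(X,Y) = g⁴·H_N(X,Y) for all vector fields X, Y (pointwise, with g⁴ the function p ↦ g(p)⁴). -/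
noncomputable section

variable {n : ℕ}

section Aux

variable {n : ℕ}

lemma sApp {N : Vn n → Vn n →L[ℝ] Vn n} {X : Vn n → Vn n}
    (hN : ContDiff ℝ (⊤ : ℕ∞) N) (hX : ContDiff ℝ (⊤ : ℕ∞) X) :
    ContDiff ℝ (⊤ : ℕ∞) (fun q => N q (X q)) := hN.clm_apply hX

lemma sComb {N : Vn n → Vn n →L[ℝ] Vn n} {f g : Vn n → ℝ} {X : Vn n → Vn n}
    (hN : ContDiff ℝ (⊤ : ℕ∞) N) (hf : ContDiff ℝ (⊤ : ℕ∞) f) (hg : ContDiff ℝ (⊤ : ℕ∞) g)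
    (hX : ContDiff ℝ (⊤ : ℕ∞) X) :
    ContDiff ℝ (⊤ : ℕ∞) (fun q => f q • X q + g q • N q (X q)) :=
  (hf.smul hX).add (hg.smul (hN.clm_apply hX))

lemma dApp {N : Vn n → Vn n →L[ℝ] Vn n} {X : Vn n → Vn n}
    (hN : ContDiff ℝ (⊤ : ℕ∞) N) (hX : ContDiff ℝ (⊤ : ℕ∞) X) (p v : Vn n) :
    fderiv ℝ (fun q => N q (X q)) p v
      = fderiv ℝ N p v (X p) + N p (fderiv ℝ X p v) := by
  rw [fderiv_clm_apply (hN.differentiable (by simp) p) (hX.differentiable (by simp) p)]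
  simp
  abel

lemma dComb {N : Vn n → Vn n →L[ℝ] Vn n} {f g : Vn n → ℝ} {X : Vn n → Vn n}
    (hN : ContDiff ℝ (⊤ : ℕ∞) N) (hf : ContDiff ℝ (⊤ : ℕ∞) f) (hg : ContDiff ℝ (⊤ : ℕ∞) g)
    (hX : ContDiff ℝ (⊤ : ℕ∞) X) (p v : Vn n) :
    fderiv ℝ (fun q => f q • X q + g q • N q (X q)) p v
      = f p • fderiv ℝ X p v + fderiv ℝ f p v • X p
        + g p • (fderiv ℝ N p v (X p) + N p (fderiv ℝ X p v))
        + fderiv ℝ g p v • N p (X p) := by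
  have h1 : DifferentiableAt ℝ (fun q => f q • X q) p :=
    ((hf.smul hX).differentiable (by simp) p)
  have h2 : DifferentiableAt ℝ (fun q => g q • N q (X q)) p :=
    ((hg.smul (hN.clm_apply hX)).differentiable (by simp) p)
  rw [fderiv_fun_add h1 h2]
  rw [ContinuousLinearMap.add_apply,
    fderiv_fun_smul (hf.differentiable (by simp) p) (hX.differentiable (by simp) p),
    fderiv_fun_smul (hg.differentiable (by simp) p) ((hN.clm_apply hX).differentiable (by simp) p)]
  simp [dApp hN hX]
  module

/-- The tensorial correction term `K` with
`T_{fI+gN}(X,Y) = g²·T_N(X,Y) + g·K(X,Y)`. -/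
def Kf (N : Vn n → Vn n →L[ℝ] Vn n) (f g : Vn n → ℝ) (X Y : Vn n → Vn n) : Vn n → Vn n :=
  fun p =>
    fderiv ℝ f p (N p (X p)) • Y p - fderiv ℝ f p (N p (Y p)) • X p
    + fderiv ℝ f p (Y p) • N p (X p) - fderiv ℝ f p (X p) • N p (Y p)
    + fderiv ℝ g p (N p (X p)) • N p (Y p) - fderiv ℝ g p (N p (Y p)) • N p (X p)
    + fderiv ℝ g p (Y p) • N p (N p (X p)) - fderiv ℝ g p (X p) • N p (N p (Y p))

lemma nijComb {N : Vn n → Vn n →L[ℝ] Vn n} {f g : Vn n → ℝ} {X Y : Vn n → Vn n}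
    (hN : ContDiff ℝ (⊤ : ℕ∞) N) (hf : ContDiff ℝ (⊤ : ℕ∞) f) (hg : ContDiff ℝ (⊤ : ℕ∞) g)
    (hX : ContDiff ℝ (⊤ : ℕ∞) X) (hY : ContDiff ℝ (⊤ : ℕ∞) Y) (p : Vn n) :
    nijT (fun q v => f q • v + g q • N q v) X Y p
      = g p ^ 2 • nijT (fun q v => N q v) X Y p + g p • Kf N f g X Y p := by
  simp only [nijT, lieB, Kf]
  simp only [dComb hN hf hg hX, dComb hN hf hg hY, dApp hN hX, dApp hN hY]
  simp only [map_add, map_sub, map_smul, ContinuousLinearMap.add_apply,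
    ContinuousLinearMap.smul_apply, smul_add, smul_sub, smul_eq_mul]
  module

lemma nijCombL {N : Vn n → Vn n →L[ℝ] Vn n} {f g : Vn n → ℝ} {X Y : Vn n → Vn n}
    (hN : ContDiff ℝ (⊤ : ℕ∞) N) (hf : ContDiff ℝ (⊤ : ℕ∞) f) (hg : ContDiff ℝ (⊤ : ℕ∞) g)
    (hX : ContDiff ℝ (⊤ : ℕ∞) X) (hY : ContDiff ℝ (⊤ : ℕ∞) Y) (p : Vn n) :
    nijT (fun q v => N q v) (fun q => f q • X q + g q • N q (X q)) Y p
      = f p • nijT (fun q v => N q v) X Y p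
        + g p • nijT (fun q v => N q v) (fun q => N q (X q)) Y p := by
  simp only [nijT, lieB]
  simp only [dApp hN (sComb hN hf hg hX), dApp hN (sApp hN hX), dApp hN hX, dApp hN hY,
    dComb hN hf hg hX]
  simp only [map_add, map_sub, map_smul, ContinuousLinearMap.add_apply,
    ContinuousLinearMap.smul_apply, smul_add, smul_sub, smul_eq_mul]
  module

lemma nijCombR {N : Vn n → Vn n →L[ℝ] Vn n} {f g : Vn n → ℝ} {X Y : Vn n → Vn n}
    (hN : ContDiff ℝ (⊤ : ℕ∞) N) (hf : ContDiff ℝ (⊤ : ℕ∞) f) (hg : ContDiff ℝ (⊤ : ℕ∞) g)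
    (hX : ContDiff ℝ (⊤ : ℕ∞) X) (hY : ContDiff ℝ (⊤ : ℕ∞) Y) (p : Vn n) :
    nijT (fun q v => N q v) X (fun q => f q • Y q + g q • N q (Y q)) p
      = f p • nijT (fun q v => N q v) X Y p
        + g p • nijT (fun q v => N q v) X (fun q => N q (Y q)) p := by
  simp only [nijT, lieB]
  simp only [dApp hN (sComb hN hf hg hY), dApp hN (sApp hN hY), dApp hN hX, dApp hN hY,
    dComb hN hf hg hY]
  simp only [map_add, map_sub, map_smul, ContinuousLinearMap.add_apply,
    ContinuousLinearMap.smul_apply, smul_add, smul_sub, smul_eq_mul]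
  module

end Aux

/-- Bogoyavlenskij's identity: the Haantjes torsion of `fI + gN`
satisfies `H_{fI+gN}(X,Y) = g⁴·H_N(X,Y)` pointwise. -/
theorem stmt15 (n : ℕ) (hn : 1 ≤ n)
    (N : Vn n → Vn n →L[ℝ] Vn n) (hN : ContDiff ℝ (⊤ : ℕ∞) N)
    (f g : Vn n → ℝ) (hf : ContDiff ℝ (⊤ : ℕ∞) f) (hg : ContDiff ℝ (⊤ : ℕ∞) g) :
    ∀ X Y : Vn n → Vn n, ContDiff ℝ (⊤ : ℕ∞) X → ContDiff ℝ (⊤ : ℕ∞) Y → ∀ p,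
      haanT (fun q v => f q • v + g q • N q v) X Y p
        = g p ^ 4 • haanT (fun q v => N q v) X Y p := by
  intro X Y hX hY p
  have hMX := sComb hN hf hg hX
  have hMY := sComb hN hf hg hY
  have hNX := sApp hN hX
  have hNY := sApp hN hY
  simp only [haanT]
  simp only [nijComb hN hf hg hMX hMY, nijComb hN hf hg hMX hY,
    nijComb hN hf hg hX hMY, nijComb hN hf hg hX hY]
  simp only [nijCombL hN hf hg hX hMY, nijCombL hN hf hg hX hY,
    nijCombR hN hf hg hX hY, nijCombR hN hf hg hNX hY]
  simp only [Kf]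
  simp only [map_add, map_sub, map_smul, ContinuousLinearMap.add_apply,
    ContinuousLinearMap.smul_apply, smul_add, smul_sub, smul_eq_mul]
  module
end
end

section
/- Let n ≥ 1 and let N be a (1,1) tensor field on ℝⁿ whose Haantjes torsion vanishes identically, H_N = 0. Then for any integer k ≥ 0 and any smooth functions a₀, ..., a_k : ℝⁿ → ℝ, the (1,1) tensor field p(N) defined by p(N)(q) = Σ_{m=0}^{k} a_m(q)·N(q)^m also has vanishing Haantjes torsion, H_{p(N)} = 0. -/
noncomputable section

variable {n : ℕ}

abbrev En (n : ℕ) : Type := Vn n →L[ℝ] Vn n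

section BogoyavlenskijAux
open Finset

/-- Algebraic (pointwise) Nijenhuis torsion. -/
def Tc (A : En n) (B : Vn n →L[ℝ] En n) (x y : Vn n) : Vn n :=
  B (A x) y - B (A y) x - A (B x y) + A (B y x)

/-- Algebraic (pointwise) Haantjes torsion. -/
def Hc (A : En n) (B : Vn n →L[ℝ] En n) (x y : Vn n) : Vn n :=
  Tc A B (A x) (A y) - A (Tc A B (A x) y + Tc A B x (A y) - A (Tc A B x y))

/-- The fundamental operator `Λ(x) = B(A²x) - 2A B(Ax) + A² B(x)`. -/
def Lm (A : En n) (B : Vn n →L[ℝ] En n) (x : Vn n) : En n :=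
  B (A (A x)) - A * B (A x) - A * B (A x) + A * A * B x

/-- `Cl(x,y) = [Λ(x), A] y`. -/
def Cl (A : En n) (B : Vn n →L[ℝ] En n) (x y : Vn n) : Vn n :=
  Lm A B x (A y) - A (Lm A B x y)

lemma Hc_eq_Cl (A : En n) (B : Vn n →L[ℝ] En n) (x y : Vn n) :
    Hc A B x y = Cl A B x y - Cl A B y x := by
  simp only [Hc, Tc, Cl, Lm, ContinuousLinearMap.sub_apply, ContinuousLinearMap.add_apply,
    ContinuousLinearMap.mul_apply, map_add, map_sub]
  abel

section Psi
variable (A : En n) (b : ℕ → ℝ) (k : ℕ)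

/-- `PsiL C (x,y) = Σ_m b_m Σ_{i+j=m-1} A^i C(x, A^j y)`. -/
def PsiL (C : Vn n → Vn n → Vn n) : Vn n → Vn n → Vn n :=
  fun x y => ∑ m ∈ range (k+1), b m • ∑ i ∈ range m, (A ^ i) (C x ((A ^ (m - 1 - i)) y))

/-- `PsiR C (x,y) = Σ_m b_m Σ_{i+j=m-1} A^i C(A^j x, y)`. -/
def PsiR (C : Vn n → Vn n → Vn n) : Vn n → Vn n → Vn n :=
  fun x y => ∑ m ∈ range (k+1), b m • ∑ i ∈ range m, (A ^ i) (C ((A ^ (m - 1 - i)) x) y)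

end Psi

def IsPair (C D : Vn n → Vn n → Vn n) : Prop := ∀ x y, C x y = D y x

lemma pair_LR {A : En n} {b : ℕ → ℝ} {k : ℕ} {C D : Vn n → Vn n → Vn n}
    (h : IsPair C D) : IsPair (PsiL A b k C) (PsiR A b k D) := by
  intro x y
  refine Finset.sum_congr rfl fun m _ => ?_
  congr 1
  exact Finset.sum_congr rfl fun i _ => by rw [h]

lemma pair_RL {A : En n} {b : ℕ → ℝ} {k : ℕ} {C D : Vn n → Vn n → Vn n}
    (h : IsPair C D) : IsPair (PsiR A b k C) (PsiL A b k D) := by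
  intro x y
  refine Finset.sum_congr rfl fun m _ => ?_
  congr 1
  exact Finset.sum_congr rfl fun i _ => by rw [h]

lemma psiL_congr {A : En n} {b : ℕ → ℝ} {k : ℕ} {C D : Vn n → Vn n → Vn n}
    (h : ∀ x y, C x y = D x y) (x y : Vn n) : PsiL A b k C x y = PsiL A b k D x y := by
  refine Finset.sum_congr rfl fun m _ => ?_
  congr 1
  exact Finset.sum_congr rfl fun i _ => by rw [h]

lemma powApp_comm (A : En n) (i u : ℕ) (z : Vn n) :
    (A ^ i) ((A ^ u) z) = (A ^ u) ((A ^ i) z) := by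
  rw [← ContinuousLinearMap.mul_apply, ← ContinuousLinearMap.mul_apply, pow_mul_comm]

lemma appA (A : En n) (j : ℕ) (w : Vn n) : (A ^ j) (A w) = A ((A ^ j) w) := by
  have := powApp_comm A j 1 w
  simpa [pow_one] using this

lemma swap4 (k : ℕ) (F : ℕ → ℕ → ℕ → ℕ → Vn n) :
    (∑ m ∈ range (k+1), ∑ i ∈ range m, ∑ m' ∈ range (k+1), ∑ u ∈ range m', F m i m' u)
      = ∑ m' ∈ range (k+1), ∑ u ∈ range m', ∑ m ∈ range (k+1), ∑ i ∈ range m, F m i m' u := by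
  calc (∑ m ∈ range (k+1), ∑ i ∈ range m, ∑ m' ∈ range (k+1), ∑ u ∈ range m', F m i m' u)
      = ∑ m ∈ range (k+1), ∑ m' ∈ range (k+1), ∑ i ∈ range m, ∑ u ∈ range m', F m i m' u :=
        Finset.sum_congr rfl fun m _ => Finset.sum_comm
    _ = ∑ m' ∈ range (k+1), ∑ m ∈ range (k+1), ∑ i ∈ range m, ∑ u ∈ range m', F m i m' u :=
        Finset.sum_comm
    _ = ∑ m' ∈ range (k+1), ∑ u ∈ range m', ∑ m ∈ range (k+1), ∑ i ∈ range m, F m i m' u := by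
        refine Finset.sum_congr rfl fun m' _ => ?_
        calc (∑ m ∈ range (k+1), ∑ i ∈ range m, ∑ u ∈ range m', F m i m' u)
            = ∑ m ∈ range (k+1), ∑ u ∈ range m', ∑ i ∈ range m, F m i m' u :=
              Finset.sum_congr rfl fun m _ => Finset.sum_comm
          _ = ∑ u ∈ range m', ∑ m ∈ range (k+1), ∑ i ∈ range m, F m i m' u := Finset.sum_comm

lemma psi_comm (A : En n) (b : ℕ → ℝ) (k : ℕ) (C : Vn n → Vn n → Vn n) :
    PsiL A b k (PsiR A b k C) = PsiR A b k (PsiL A b k C) := by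
  funext x y
  simp only [PsiL, PsiR, map_sum, map_smul, Finset.smul_sum]
  rw [swap4]
  refine Finset.sum_congr rfl fun m' _ => Finset.sum_congr rfl fun u _ => ?_
  refine Finset.sum_congr rfl fun m _ => Finset.sum_congr rfl fun i _ => ?_
  rw [powApp_comm, smul_comm]

lemma telE (A : En n) (W : Vn n → En n) (x : Vn n) : ∀ m : ℕ,
    W ((A ^ m) x) - A ^ m * W x
      = ∑ i ∈ range m, A ^ i * (W (A ((A ^ (m - 1 - i)) x)) - A * W ((A ^ (m - 1 - i)) x))
  | 0 => by simp
  | (m+1) => by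
    rw [Finset.sum_range_succ']
    have e1 : ∀ i : ℕ, m + 1 - 1 - (i + 1) = m - 1 - i := fun i => by omega
    have e2 : m + 1 - 1 - 0 = m := by omega
    simp only [e1, e2, pow_zero, one_mul, pow_succ]
    have hmul : ∀ i : ℕ, A ^ i * A = A * A ^ i := fun i => (pow_mul_comm' A i)
    calc W ((A ^ (m+1)) x) - A ^ (m+1) * W x
        = (W (A ((A ^ m) x)) - A * W ((A ^ m) x))
            + A * (W ((A ^ m) x) - A ^ m * W x) := by
          rw [mul_sub]
          have : (A ^ (m+1)) x = A ((A ^ m) x) := by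
            rw [pow_succ']; rfl
          rw [this, pow_succ', mul_assoc]
          abel
      _ = (W (A ((A ^ m) x)) - A * W ((A ^ m) x))
            + A * ∑ i ∈ range m, A ^ i * (W (A ((A ^ (m - 1 - i)) x))
                - A * W ((A ^ (m - 1 - i)) x)) := by rw [telE A W x m]
      _ = (∑ i ∈ range m, A ^ i * A * (W (A ((A ^ (m - 1 - i)) x))
                - A * W ((A ^ (m - 1 - i)) x)))
            + (W (A ((A ^ m) x)) - A * W ((A ^ m) x)) := by
          rw [Finset.mul_sum]
          rw [add_comm]
          congr 1
          refine Finset.sum_congr rfl fun i _ => ?_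
          rw [hmul, mul_assoc]

lemma telV (A U : En n) (y : Vn n) : ∀ m : ℕ,
    U ((A ^ m) y) - (A ^ m) (U y)
      = ∑ i ∈ range m, (A ^ i) (U (A ((A ^ (m - 1 - i)) y)) - A (U ((A ^ (m - 1 - i)) y)))
  | 0 => by simp
  | (m+1) => by
    rw [Finset.sum_range_succ']
    have e1 : ∀ i : ℕ, m + 1 - 1 - (i + 1) = m - 1 - i := fun i => by omega
    have e2 : m + 1 - 1 - 0 = m := by omega
    simp only [e1, e2, pow_zero, ContinuousLinearMap.one_apply]
    have happ : ∀ z, (A ^ (m+1)) z = A ((A ^ m) z) := fun z => by rw [pow_succ']; rfl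
    calc U ((A ^ (m+1)) y) - (A ^ (m+1)) (U y)
        = (U (A ((A ^ m) y)) - A (U ((A ^ m) y)))
            + A (U ((A ^ m) y) - (A ^ m) (U y)) := by
          rw [map_sub, happ, happ]
          abel
      _ = (U (A ((A ^ m) y)) - A (U ((A ^ m) y)))
            + A (∑ i ∈ range m, (A ^ i) (U (A ((A ^ (m - 1 - i)) y))
                - A (U ((A ^ (m - 1 - i)) y)))) := by rw [telV A U y m]
      _ = (∑ i ∈ range m, (A ^ (i+1)) (U (A ((A ^ (m - 1 - i)) y))
                - A (U ((A ^ (m - 1 - i)) y))))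
            + (U (A ((A ^ m) y)) - A (U ((A ^ m) y))) := by
          rw [map_sum, add_comm]
          congr 1
          refine Finset.sum_congr rfl fun i _ => ?_
          rw [pow_succ']
          rfl

lemma brktPoly (A : En n) (b : ℕ → ℝ) (k : ℕ) (A' : En n)
    (hA' : A' = ∑ m ∈ range (k+1), b m • A ^ m) (U : En n) (y : Vn n) :
    U (A' y) - A' (U y)
      = ∑ m ∈ range (k+1), b m • ∑ i ∈ range m,
          (A ^ i) (U (A ((A ^ (m - 1 - i)) y)) - A (U ((A ^ (m - 1 - i)) y))) := by
  have h1 : A' y = ∑ m ∈ range (k+1), b m • (A ^ m) y := by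
    rw [hA']; simp [ContinuousLinearMap.sum_apply]
  have h2 : A' (U y) = ∑ m ∈ range (k+1), b m • (A ^ m) (U y) := by
    rw [hA']; simp [ContinuousLinearMap.sum_apply]
  rw [h1, h2, map_sum]
  simp only [map_smul]
  rw [← Finset.sum_sub_distrib]
  refine Finset.sum_congr rfl fun m _ => ?_
  rw [← smul_sub, telV]

lemma conj_comm (A E' : En n) (h : Commute E' A) (i j : ℕ) (Z : En n) :
    E' * (A ^ i * Z * A ^ j) = A ^ i * (E' * Z) * A ^ j := by
  have h2 : E' * A ^ i = A ^ i * E' := (h.pow_right i).eq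
  rw [← mul_assoc, ← mul_assoc, h2, mul_assoc (A ^ i) E' Z]

/-- `LmF A'' Bf x = Bf(A''²x) - 2 A'' Bf(A''x) + A''² Bf(x)` for a plain map `Bf`. -/
def LmF (A'' : En n) (Bf : Vn n → En n) (x : Vn n) : En n :=
  Bf (A'' (A'' x)) - A'' * Bf (A'' x) - A'' * Bf (A'' x) + A'' * A'' * Bf x

def BcF (A : En n) (c : ℕ → Vn n →L[ℝ] ℝ) (k : ℕ) (v : Vn n) : En n :=
  ∑ m ∈ range (k+1), c m v • A ^ m

def BdF (A : En n) (B : Vn n →L[ℝ] En n) (b : ℕ → ℝ) (k : ℕ) (v : Vn n) : En n :=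
  ∑ m ∈ range (k+1), b m • ∑ i ∈ range m, A ^ i * B v * A ^ (m - 1 - i)

lemma mulBd (A : En n) (B : Vn n →L[ℝ] En n) (b : ℕ → ℝ) (k : ℕ)
    (E' : En n) (h : Commute E' A) (v : Vn n) :
    E' * BdF A B b k v
      = ∑ m ∈ range (k+1), b m • ∑ i ∈ range m, A ^ i * (E' * B v) * A ^ (m - 1 - i) := by
  simp only [BdF, Finset.mul_sum, mul_smul_comm]
  refine Finset.sum_congr rfl fun m _ => ?_
  congr 1
  exact Finset.sum_congr rfl fun i _ => conj_comm A E' h i _ (B v)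

lemma hd_lemma (A : En n) (B : Vn n →L[ℝ] En n) (b : ℕ → ℝ) (k : ℕ) (A' : En n)
    (hA'A : Commute A' A) (x : Vn n) :
    LmF A' (BdF A B b k) x
      = ∑ m ∈ range (k+1), b m • ∑ i ∈ range m,
          A ^ i * (B (A' (A' x)) - A' * B (A' x) - A' * B (A' x) + A' * A' * B x)
            * A ^ (m - 1 - i) := by
  have h2 : Commute (A' * A') A := hA'A.mul_left hA'A
  simp only [LmF]
  rw [mulBd A B b k A' hA'A, mulBd A B b k (A' * A') h2]
  simp only [BdF, mul_sub, sub_mul, mul_add, add_mul, smul_sub, smul_add,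
    Finset.sum_sub_distrib, Finset.sum_add_distrib]

lemma sandwich_brk (A : En n) (b : ℕ → ℝ) (k : ℕ) (G : ℕ → ℕ → En n) (w : Vn n) :
    (∑ m ∈ range (k+1), b m • ∑ i ∈ range m, A ^ i * G m i * A ^ (m - 1 - i)) (A w)
      - A ((∑ m ∈ range (k+1), b m • ∑ i ∈ range m, A ^ i * G m i * A ^ (m - 1 - i)) w)
      = ∑ m ∈ range (k+1), b m • ∑ i ∈ range m,
          (A ^ i) ((G m i) (A ((A ^ (m - 1 - i)) w)) - A ((G m i) ((A ^ (m - 1 - i)) w))) := by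
  simp only [ContinuousLinearMap.sum_apply, ContinuousLinearMap.smul_apply,
    ContinuousLinearMap.mul_apply, map_sum, map_smul]
  rw [← Finset.sum_sub_distrib]
  refine Finset.sum_congr rfl fun m _ => ?_
  rw [← smul_sub, ← Finset.sum_sub_distrib]
  congr 1
  refine Finset.sum_congr rfl fun i _ => ?_
  rw [appA A (m - 1 - i) w, ← appA A i, map_sub]

/-- `DlF E B v = B(Ev) - E B(v)`. -/
def DlF (E : En n) (B : Vn n →L[ℝ] En n) (v : Vn n) : En n := B (E v) - E * B v

lemma DlF_sum (E : En n) (B : Vn n →L[ℝ] En n) (s : Finset ℕ) (b : ℕ → ℝ) (z : ℕ → Vn n) :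
    DlF E B (∑ m ∈ s, b m • z m) = ∑ m ∈ s, b m • DlF E B (z m) := by
  simp only [DlF, map_sum, map_smul, Finset.mul_sum, mul_smul_comm, smul_sub,
    Finset.sum_sub_distrib]

lemma poly_tel (A : En n) (B : Vn n →L[ℝ] En n) (b : ℕ → ℝ) (k : ℕ) (A' : En n)
    (hA' : A' = ∑ m ∈ range (k+1), b m • A ^ m) (E : En n) (v : Vn n) :
    DlF E B (A' v) - A' * DlF E B v
      = ∑ m ∈ range (k+1), b m • ∑ i ∈ range m,
          A ^ i * (DlF E B (A ((A ^ (m - 1 - i)) v)) - A * DlF E B ((A ^ (m - 1 - i)) v)) := by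
  have h1 : A' v = ∑ m ∈ range (k+1), b m • (A ^ m) v := by
    rw [hA']; simp [ContinuousLinearMap.sum_apply]
  have h2 : DlF E B (A' v) = ∑ m ∈ range (k+1), b m • DlF E B ((A ^ m) v) := by
    rw [h1, DlF_sum]
  have h3 : A' * DlF E B v = ∑ m ∈ range (k+1), b m • (A ^ m * DlF E B v) := by
    rw [hA', Finset.sum_mul]; simp [smul_mul_assoc]
  rw [h2, h3, ← Finset.sum_sub_distrib]
  refine Finset.sum_congr rfl fun m _ => ?_
  rw [← telE A (DlF E B) v m]
  exact (smul_sub (b m) _ _).symm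

lemma sandwichL_brk (A : En n) (b : ℕ → ℝ) (k : ℕ) (G : ℕ → ℕ → En n) (w : Vn n) :
    (∑ m ∈ range (k+1), b m • ∑ i ∈ range m, A ^ i * G m i) (A w)
      - A ((∑ m ∈ range (k+1), b m • ∑ i ∈ range m, A ^ i * G m i) w)
      = ∑ m ∈ range (k+1), b m • ∑ i ∈ range m,
          (A ^ i) ((G m i) (A w) - A ((G m i) w)) := by
  simp only [ContinuousLinearMap.sum_apply, ContinuousLinearMap.smul_apply,
    ContinuousLinearMap.mul_apply, map_sum, map_smul]
  rw [← Finset.sum_sub_distrib]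
  refine Finset.sum_congr rfl fun m _ => ?_
  rw [← smul_sub, ← Finset.sum_sub_distrib]
  congr 1
  refine Finset.sum_congr rfl fun i _ => ?_
  rw [← appA A i, map_sub]

lemma fact_g1 (A : En n) (B : Vn n →L[ℝ] En n) (A' : En n) (hA'A : Commute A' A) (v : Vn n) :
    DlF A' B (A v) - A * DlF A' B v = DlF A B (A' v) - A' * DlF A B v := by
  have e1 : A' (A v) = A (A' v) := by
    rw [← ContinuousLinearMap.mul_apply, hA'A.eq, ContinuousLinearMap.mul_apply]
  have e2 : A * (A' * B v) = A' * (A * B v) := by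
    rw [← mul_assoc, ← hA'A.eq, mul_assoc]
  simp only [DlF, mul_sub]
  rw [e1, e2]
  abel

lemma fact_w2 (A : En n) (B : Vn n →L[ℝ] En n) (z : Vn n) :
    DlF A B (A z) - A * DlF A B z = Lm A B z := by
  simp only [DlF, Lm, mul_sub, mul_assoc]
  abel

lemma alg_main (A : En n) (B : Vn n →L[ℝ] En n)
    (hyp : ∀ x y, Hc A B x y = 0) (k : ℕ) (b : ℕ → ℝ) (c : ℕ → Vn n →L[ℝ] ℝ)
    (A' : En n) (B' : Vn n →L[ℝ] En n)
    (hA' : A' = ∑ m ∈ range (k+1), b m • A ^ m)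
    (hB' : ∀ v, B' v = BcF A c k v + BdF A B b k v)
    (x y : Vn n) : Hc A' B' x y = 0 := by
  have hA'A : Commute A' A := by
    rw [hA']
    exact Commute.sum_left _ _ _ fun m _ => ((Commute.refl A).pow_left m).smul_left (b m)
  -- the symmetric pair property
  have pair0 : IsPair (Cl A B) (Cl A B) := by
    intro x y
    have h := Hc_eq_Cl A B x y
    rw [hyp x y] at h
    exact sub_eq_zero.mp h.symm
  have pair4 : IsPair (PsiL A b k (PsiL A b k (PsiR A b k (PsiR A b k (Cl A B)))))
      (PsiL A b k (PsiL A b k (PsiR A b k (PsiR A b k (Cl A B))))) := by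
    have p1 : IsPair (PsiR A b k (Cl A B)) (PsiL A b k (Cl A B)) := pair_RL pair0
    have p2 : IsPair (PsiR A b k (PsiR A b k (Cl A B))) (PsiL A b k (PsiL A b k (Cl A B))) :=
      pair_RL p1
    have p3 : IsPair (PsiL A b k (PsiR A b k (PsiR A b k (Cl A B))))
        (PsiR A b k (PsiL A b k (PsiL A b k (Cl A B)))) := pair_LR p2
    have p4 : IsPair (PsiL A b k (PsiL A b k (PsiR A b k (PsiR A b k (Cl A B)))))
        (PsiR A b k (PsiR A b k (PsiL A b k (PsiL A b k (Cl A B))))) := pair_LR p3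
    have hcomm : PsiR A b k (PsiR A b k (PsiL A b k (PsiL A b k (Cl A B))))
        = PsiL A b k (PsiL A b k (PsiR A b k (PsiR A b k (Cl A B)))) := by
      simp only [← psi_comm]
    rw [hcomm] at p4
    exact p4
  -- the main identity
  have key : ∀ x y, Cl A' B' x y
      = PsiL A b k (PsiL A b k (PsiR A b k (PsiR A b k (Cl A B)))) x y := by
    intro x y
    have e1 : Cl A' B' x y
        = PsiL A b k (fun x w => (Lm A' B' x) (A w) - A ((Lm A' B' x) w)) x y :=
      brktPoly A b k A' hA' (Lm A' B' x) y
    have e2 : ∀ x w, (Lm A' B' x) (A w) - A ((Lm A' B' x) w)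
        = PsiL A b k (fun x w => (DlF A' B (A' x) - A' * DlF A' B x) (A w)
            - A ((DlF A' B (A' x) - A' * DlF A' B x) w)) x w := by
      intro x w
      have hsplit : Lm A' B' x = LmF A' (BcF A c k) x + LmF A' (BdF A B b k) x := by
        simp only [Lm, LmF, hB', mul_add]
        abel
      have hcBc : Commute (LmF A' (BcF A c k) x) A := by
        have hc1 : ∀ v, Commute (BcF A c k v) A := fun v =>
          Commute.sum_left _ _ _ fun m _ => ((Commute.refl A).pow_left m).smul_left (c m v)
        exact Commute.add_left
          (Commute.sub_left (Commute.sub_left (hc1 _) (hA'A.mul_left (hc1 _)))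
            (hA'A.mul_left (hc1 _)))
          ((hA'A.mul_left hA'A).mul_left (hc1 _))
      have hred : (Lm A' B' x) (A w) - A ((Lm A' B' x) w)
          = (LmF A' (BdF A B b k) x) (A w) - A ((LmF A' (BdF A B b k) x) w) := by
        rw [hsplit]
        simp only [ContinuousLinearMap.add_apply, map_add]
        have hz : (LmF A' (BcF A c k) x) (A w) = A ((LmF A' (BcF A c k) x) w) := by
          calc (LmF A' (BcF A c k) x) (A w) = ((LmF A' (BcF A c k) x) * A) w := rfl
            _ = (A * (LmF A' (BcF A c k) x)) w := by rw [hcBc.eq]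
            _ = A ((LmF A' (BcF A c k) x) w) := rfl
        rw [hz]
        abel
      rw [hred, hd_lemma A B b k A' hA'A x,
        sandwich_brk A b k
          (fun _ _ => B (A' (A' x)) - A' * B (A' x) - A' * B (A' x) + A' * A' * B x) w]
      have hfa : B (A' (A' x)) - A' * B (A' x) - A' * B (A' x) + A' * A' * B x
          = DlF A' B (A' x) - A' * DlF A' B x := by
        simp only [DlF, mul_sub, mul_assoc]
        abel
      rw [hfa]
      rfl
    have e3 : ∀ x w, (DlF A' B (A' x) - A' * DlF A' B x) (A w)
          - A ((DlF A' B (A' x) - A' * DlF A' B x) w)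
        = PsiR A b k (fun v w => (DlF A B (A' v) - A' * DlF A B v) (A w)
            - A ((DlF A B (A' v) - A' * DlF A B v) w)) x w := by
      intro x w
      rw [poly_tel A B b k A' hA' A' x,
        sandwichL_brk A b k
          (fun m i => DlF A' B (A ((A ^ (m - 1 - i)) x)) - A * DlF A' B ((A ^ (m - 1 - i)) x)) w]
      refine Finset.sum_congr rfl fun m _ => ?_
      congr 1
      refine Finset.sum_congr rfl fun i _ => ?_
      rw [fact_g1 A B A' hA'A]
    have e4 : ∀ v w, (DlF A B (A' v) - A' * DlF A B v) (A w)
          - A ((DlF A B (A' v) - A' * DlF A B v) w)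
        = PsiR A b k (Cl A B) v w := by
      intro v w
      rw [poly_tel A B b k A' hA' A v]
      have hlw : ∀ z : Vn n, DlF A B (A z) - A * DlF A B z = Lm A B z := fact_w2 A B
      simp only [hlw]
      rw [sandwichL_brk A b k (fun m i => Lm A B ((A ^ (m - 1 - i)) v)) w]
      rfl
    have E2 : (fun x w => (Lm A' B' x) (A w) - A ((Lm A' B' x) w))
        = (fun x y => PsiL A b k (fun x w => (DlF A' B (A' x) - A' * DlF A' B x) (A w)
            - A ((DlF A' B (A' x) - A' * DlF A' B x) w)) x y) :=
      funext fun x => funext fun w => e2 x w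
    have E3 : (fun x w => (DlF A' B (A' x) - A' * DlF A' B x) (A w)
          - A ((DlF A' B (A' x) - A' * DlF A' B x) w))
        = (fun x y => PsiR A b k (fun v w => (DlF A B (A' v) - A' * DlF A B v) (A w)
            - A ((DlF A B (A' v) - A' * DlF A B v) w)) x y) :=
      funext fun x => funext fun w => e3 x w
    have E4 : (fun v w => (DlF A B (A' v) - A' * DlF A B v) (A w)
          - A ((DlF A B (A' v) - A' * DlF A B v) w))
        = (fun v w => PsiR A b k (Cl A B) v w) :=
      funext fun v => funext fun w => e4 v w
    rw [e1, E2, E3, E4]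
  rw [Hc_eq_Cl, key x y, key y x, pair4 x y]
  exact sub_self _


lemma nij_eq (M : Vn n → En n) (X Y : Vn n → Vn n) (hM : Differentiable ℝ M) (p : Vn n)
    (hX : DifferentiableAt ℝ X p) (hY : DifferentiableAt ℝ Y p) :
    nijT (fun q v => M q v) X Y p = Tc (M p) (fderiv ℝ M p) (X p) (Y p) := by
  have hMX : fderiv ℝ (fun q => M q (X q)) p
      = (M p).comp (fderiv ℝ X p) + (fderiv ℝ M p).flip (X p) :=
    fderiv_clm_apply (hM p) hX
  have hMY : fderiv ℝ (fun q => M q (Y q)) p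
      = (M p).comp (fderiv ℝ Y p) + (fderiv ℝ M p).flip (Y p) :=
    fderiv_clm_apply (hM p) hY
  simp only [nijT, lieB, Tc, hMX, hMY, ContinuousLinearMap.add_apply,
    ContinuousLinearMap.comp_apply, ContinuousLinearMap.flip_apply, map_add, map_sub]
  abel

lemma haan_eq (M : Vn n → En n) (X Y : Vn n → Vn n) (hM : ContDiff ℝ (⊤ : ℕ∞) M)
    (hX : ContDiff ℝ (⊤ : ℕ∞) X) (hY : ContDiff ℝ (⊤ : ℕ∞) Y) (p : Vn n) :
    haanT (fun q v => M q v) X Y p = Hc (M p) (fderiv ℝ M p) (X p) (Y p) := by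
  have hMd : Differentiable ℝ M := hM.differentiable (by simp)
  have hXd : Differentiable ℝ X := hX.differentiable (by simp)
  have hYd : Differentiable ℝ Y := hY.differentiable (by simp)
  have hMX : Differentiable ℝ (fun q => M q (X q)) := hMd.clm_apply hXd
  have hMY : Differentiable ℝ (fun q => M q (Y q)) := hMd.clm_apply hYd
  simp only [haanT]
  rw [nij_eq M _ _ hMd p (hMX p) (hMY p), nij_eq M _ _ hMd p (hMX p) (hYd p),
    nij_eq M _ _ hMd p (hXd p) (hMY p), nij_eq M _ _ hMd p (hXd p) (hYd p)]
  rfl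

set_option maxHeartbeats 1000000 in
lemma hasfd_pow (N : Vn n → En n) (hN : Differentiable ℝ N) (p : Vn n) (m : ℕ) :
    HasFDerivAt (fun q => (N q) ^ m)
      (∑ i ∈ range m, (ContinuousLinearMap.mulLeftRight ℝ (En n) ((N p) ^ i)
          ((N p) ^ (m - 1 - i))).comp (fderiv ℝ N p)) p := by
  induction m with
  | zero =>
    simp only [pow_zero, Finset.range_zero, Finset.sum_empty]
    exact hasFDerivAt_const 1 p
  | succ m ih =>
    have h := ((hN p).hasFDerivAt).mul' ih
    have heq : (N p • ∑ i ∈ range m, (ContinuousLinearMap.mulLeftRight ℝ (En n) ((N p) ^ i)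
            ((N p) ^ (m - 1 - i))).comp (fderiv ℝ N p))
          + (fderiv ℝ N p).smulRight ((N p) ^ m)
        = ∑ i ∈ range (m+1), (ContinuousLinearMap.mulLeftRight ℝ (En n) ((N p) ^ i)
            ((N p) ^ (m + 1 - 1 - i))).comp (fderiv ℝ N p) := by
      rw [Finset.sum_range_succ']
      have e1 : ∀ i : ℕ, m + 1 - 1 - (i + 1) = m - 1 - i := fun i => by omega
      have e2 : m + 1 - 1 - 0 = m := by omega
      refine ContinuousLinearMap.ext fun v => ?_
      simp only [e1, e2, ContinuousLinearMap.add_apply, ContinuousLinearMap.smul_apply,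
        ContinuousLinearMap.sum_apply, ContinuousLinearMap.comp_apply,
        ContinuousLinearMap.mulLeftRight_apply, ContinuousLinearMap.smulRight_apply,
        pow_zero, one_mul, smul_eq_mul, Finset.mul_sum]
      congr 1
      refine Finset.sum_congr rfl fun i _ => ?_
      rw [pow_succ']
      noncomm_ring
    rw [← heq]
    have hfun : (fun q => (N q) ^ (m+1)) = fun q => N q * (N q) ^ m := by
      funext q; rw [pow_succ']
    rw [hfun]
    exact h

lemma hasfd_poly (N : Vn n → En n) (hN : Differentiable ℝ N) (k : ℕ) (a : ℕ → Vn n → ℝ)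
    (ha : ∀ m, m ≤ k → Differentiable ℝ (a m)) (p : Vn n) :
    HasFDerivAt (fun q => ∑ m ∈ range (k+1), a m q • (N q) ^ m)
      (∑ m ∈ range (k+1), (a m p • (∑ i ∈ range m,
          (ContinuousLinearMap.mulLeftRight ℝ (En n) ((N p) ^ i)
            ((N p) ^ (m - 1 - i))).comp (fderiv ℝ N p))
        + (fderiv ℝ (a m) p).smulRight ((N p) ^ m))) p := by
  refine HasFDerivAt.fun_sum fun m hm => ?_
  have ham : Differentiable ℝ (a m) := ha m (Finset.mem_range_succ_iff.mp hm)
  exact ((ham p).hasFDerivAt).smul (hasfd_pow N hN p m)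

lemma fderiv_poly_apply (N : Vn n → En n) (hN : Differentiable ℝ N) (k : ℕ) (a : ℕ → Vn n → ℝ)
    (ha : ∀ m, m ≤ k → Differentiable ℝ (a m)) (p v : Vn n) :
    (fderiv ℝ (fun q => ∑ m ∈ range (k+1), a m q • (N q) ^ m) p) v
      = BcF (N p) (fun m => fderiv ℝ (a m) p) k v
        + BdF (N p) (fderiv ℝ N p) (fun m => a m p) k v := by
  rw [(hasfd_poly N hN k a ha p).fderiv]
  simp only [BcF, BdF, ContinuousLinearMap.sum_apply, ContinuousLinearMap.add_apply,
    ContinuousLinearMap.smul_apply, ContinuousLinearMap.comp_apply,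
    ContinuousLinearMap.mulLeftRight_apply, ContinuousLinearMap.smulRight_apply,
    Finset.sum_add_distrib]
  rw [add_comm]

end BogoyavlenskijAux

open Finset in
/-- Polynomials (with smooth-function coefficients) of a Haantjes
operator are Haantjes operators: if `H_N = 0` then `H_{p(N)} = 0` for
`p(N)(q) = Σ_{m=0}^{k} a_m(q)·N(q)^m`. -/
theorem stmt16 (n : ℕ) (hn : 1 ≤ n)
    (N : Vn n → Vn n →L[ℝ] Vn n) (hN : ContDiff ℝ (⊤ : ℕ∞) N)
    (hH : ∀ X Y : Vn n → Vn n, ContDiff ℝ (⊤ : ℕ∞) X → ContDiff ℝ (⊤ : ℕ∞) Y → ∀ p,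
      haanT (fun q v => N q v) X Y p = 0) :
    ∀ k : ℕ, ∀ a : ℕ → Vn n → ℝ, (∀ m, m ≤ k → ContDiff ℝ (⊤ : ℕ∞) (a m)) →
      ∀ X Y : Vn n → Vn n, ContDiff ℝ (⊤ : ℕ∞) X → ContDiff ℝ (⊤ : ℕ∞) Y → ∀ p,
        haanT (fun q v => ∑ m ∈ Finset.range (k + 1), a m q • (N q ^ m) v) X Y p = 0 := by
  intro k a ha X Y hX hY p
  have hNd : Differentiable ℝ N := hN.differentiable (by simp)
  have had : ∀ m, m ≤ k → Differentiable ℝ (a m) := fun m hm =>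
    (ha m hm).differentiable (by simp)
  have hMp : ContDiff ℝ (⊤ : ℕ∞) (fun q => ∑ m ∈ range (k+1), a m q • (N q) ^ m) :=
    ContDiff.sum fun m hm => (ha m (Finset.mem_range_succ_iff.mp hm)).smul (hN.pow m)
  have hfun : (fun q v => ∑ m ∈ Finset.range (k + 1), a m q • (N q ^ m) v)
      = (fun q v => (∑ m ∈ range (k+1), a m q • (N q) ^ m) v) := by
    funext q v
    simp [ContinuousLinearMap.sum_apply]
  rw [hfun, haan_eq _ X Y hMp hX hY p]
  -- pointwise Haantjes vanishing for N
  have hyp : ∀ x y, Hc (N p) (fderiv ℝ N p) x y = 0 := by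
    intro x y
    have h := hH (fun _ => x) (fun _ => y) contDiff_const contDiff_const p
    rwa [haan_eq N (fun _ => x) (fun _ => y) hN contDiff_const contDiff_const p] at h
  exact alg_main (N p) (fderiv ℝ N p) hyp k (fun m => a m p) (fun m => fderiv ℝ (a m) p)
    _ _ rfl (fderiv_poly_apply N hNd k a had p) _ _
end
end
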